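/- arXiv:1502.01551 — 6 statements merged into one kernel-verified Lean document; each statement's English description precedes it below -/
import Mathlib

section
/- Let φ : ℝ → ℝ be nonnegative and locally integrable on (0,∞), with F(x) = ∫₀^∞ φ(ζ)/(ζ+x) dζ finite for all x > 0 and φ not a.e. zero. Let c > 0 and set m = ∫₀^∞ φ(ζ)/ζ dζ − c. If m > 0 (including m = +∞), then there exists exactly one x₀ > 0 with F(x₀) = c; if m ≤ 0, there is no positive solution of F(x) = c. Moreover, for c ≤ 0 the equation F(x) = c has no solution at all. -/
open MeasureTheory Set Filter
open scoped ENNReal Topology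

private lemma stmt5_supp_pos {φ : ℝ → ℝ} (hne : ¬ (φ =ᵐ[volume.restrict (Ioi 0)] 0)) :
    0 < volume ({ζ | φ ζ ≠ 0} ∩ Ioi 0) := by
  rw [pos_iff_ne_zero]
  intro h
  apply hne
  rw [Filter.EventuallyEq, ae_iff, Measure.restrict_apply' measurableSet_Ioi]
  simpa using h

private lemma stmt5_integral_pos {φ : ℝ → ℝ} (hne : ¬ (φ =ᵐ[volume.restrict (Ioi 0)] 0))
    (f : ℝ → ℝ) (hf : IntegrableOn f (Ioi 0))
    (h0 : ∀ ζ ∈ Ioi (0:ℝ), 0 ≤ f ζ)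
    (hsupp : ∀ ζ ∈ Ioi (0:ℝ), φ ζ ≠ 0 → f ζ ≠ 0) :
    0 < ∫ ζ in Ioi (0:ℝ), f ζ := by
  refine (setIntegral_pos_iff_support_of_nonneg_ae ?_ hf).mpr ?_
  · filter_upwards [ae_restrict_mem measurableSet_Ioi] with ζ hζ using h0 ζ hζ
  · refine lt_of_lt_of_le (stmt5_supp_pos hne) (measure_mono ?_)
    rintro ζ ⟨h1, h2⟩
    exact ⟨hsupp ζ h2 h1, h2⟩

/-- Main theorem, case `b = 0`: the equation `F(x) = c` has exactly one positive
solution iff `0 < c < ∫₀^∞ φ(ζ)/ζ dζ`; otherwise no positive solution exists. -/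
theorem stmt_5 (φ : ℝ → ℝ) (c : ℝ)
    (hφpos : ∀ ζ ∈ Ioi (0 : ℝ), 0 ≤ φ ζ)
    (hloc : LocallyIntegrableOn φ (Ioi 0))
    (hint : ∀ x > (0 : ℝ), IntegrableOn (fun ζ => φ ζ / (ζ + x)) (Ioi 0))
    (hne : ¬ (φ =ᵐ[volume.restrict (Ioi 0)] 0))
    (M : ℝ≥0∞) (hM : M = ∫⁻ ζ in Ioi (0 : ℝ), ENNReal.ofReal (φ ζ / ζ)) :
    ((0 < c ∧ (c : EReal) < (M : EReal)) →
      ∃! x : ℝ, 0 < x ∧ (∫ ζ in Ioi (0 : ℝ), φ ζ / (ζ + x)) = c) ∧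
    (¬ (0 < c ∧ (c : EReal) < (M : EReal)) →
      ¬ ∃ x : ℝ, 0 < x ∧ (∫ ζ in Ioi (0 : ℝ), φ ζ / (ζ + x)) = c) := by
  set F : ℝ → ℝ := fun x => ∫ ζ in Ioi (0:ℝ), φ ζ / (ζ + x) with hFdef
  have hφm : AEStronglyMeasurable φ (volume.restrict (Ioi 0)) := hloc.aestronglyMeasurable
  -- positivity of F
  have hFpos : ∀ x > (0:ℝ), 0 < F x := by
    intro x hx
    refine stmt5_integral_pos hne _ (hint x hx) ?_ ?_
    · intro ζ hζ
      rw [mem_Ioi] at hζ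
      exact div_nonneg (hφpos ζ hζ) (add_pos hζ hx).le
    · intro ζ hζ h
      rw [mem_Ioi] at hζ
      exact div_ne_zero h (add_pos hζ hx).ne'
  -- strict antitonicity of F
  have hanti : ∀ x y : ℝ, 0 < x → x < y → F y < F x := by
    intro x y hx hxy
    have hy : 0 < y := hx.trans hxy
    have h1 := hint x hx
    have h2 := hint y hy
    have hp : 0 < ∫ ζ in Ioi (0:ℝ), (φ ζ / (ζ + x) - φ ζ / (ζ + y)) := by
      refine stmt5_integral_pos hne _ (h1.sub h2) ?_ ?_
      · intro ζ hζ
        rw [mem_Ioi] at hζ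
        have : φ ζ / (ζ + y) ≤ φ ζ / (ζ + x) := by
          apply div_le_div_of_nonneg_left (hφpos ζ hζ) (add_pos hζ hx)
          linarith
        linarith
      · intro ζ hζ h
        rw [mem_Ioi] at hζ
        have hφζ : 0 < φ ζ := lt_of_le_of_ne (hφpos ζ hζ) (Ne.symm h)
        have : φ ζ / (ζ + y) < φ ζ / (ζ + x) :=
          div_lt_div_of_pos_left hφζ (add_pos hζ hx) (by linarith)
        exact (sub_pos.mpr this).ne'
    rw [integral_sub h1 h2] at hp
    linarith
  -- continuity of F on positive reals
  have hFcont : ∀ x₀ : ℝ, 0 < x₀ → ContinuousAt F x₀ := by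
    intro x₀ hx₀
    have h2 : (0:ℝ) < x₀ / 2 := by linarith
    have hev : ∀ᶠ x in 𝓝 x₀, x₀ / 2 < x := eventually_gt_nhds (by linarith)
    refine continuousAt_of_dominated ?_ ?_ (hint (x₀/2) h2) ?_
    · filter_upwards [hev] with x hx
      exact (hint x (h2.trans hx)).aestronglyMeasurable
    · filter_upwards [hev] with x hx
      filter_upwards [ae_restrict_mem measurableSet_Ioi] with ζ hζ
      rw [mem_Ioi] at hζ
      have hxpos : (0:ℝ) < x := h2.trans hx
      rw [Real.norm_eq_abs, abs_of_nonneg (div_nonneg (hφpos ζ hζ) (add_pos hζ hxpos).le)]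
      apply div_le_div_of_nonneg_left (hφpos ζ hζ) (add_pos hζ h2)
      linarith
    · filter_upwards [ae_restrict_mem measurableSet_Ioi] with ζ hζ
      rw [mem_Ioi] at hζ
      exact ContinuousAt.div continuousAt_const
        (continuousAt_const.add continuousAt_id) (add_pos hζ hx₀).ne'
  -- F tends to 0 at infinity
  have hFtop : Tendsto F atTop (𝓝 0) := by
    have h0 : Tendsto F atTop (𝓝 (∫ ζ in Ioi (0:ℝ), (0:ℝ))) := by
      refine tendsto_integral_filter_of_dominated_convergence
        (fun ζ => φ ζ / (ζ + 1)) ?_ ?_ (hint 1 one_pos) ?_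
      · filter_upwards [eventually_ge_atTop (1:ℝ)] with x hx
        exact (hint x (by linarith)).aestronglyMeasurable
      · filter_upwards [eventually_ge_atTop (1:ℝ)] with x hx
        filter_upwards [ae_restrict_mem measurableSet_Ioi] with ζ hζ
        rw [mem_Ioi] at hζ
        rw [Real.norm_eq_abs,
          abs_of_nonneg (div_nonneg (hφpos ζ hζ) (add_pos hζ (by linarith)).le)]
        apply div_le_div_of_nonneg_left (hφpos ζ hζ) (by linarith)
        linarith
      · filter_upwards [ae_restrict_mem measurableSet_Ioi] with ζ hζ
        exact Tendsto.div_atTop tendsto_const_nhds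
          (tendsto_atTop_add_const_left _ ζ tendsto_id)
    simpa using h0
  -- value near 0 exceeds any r with ofReal r < ∫⁻ φ/ζ
  have hkey : ∀ r : ℝ, 0 ≤ r →
      ENNReal.ofReal r < ∫⁻ ζ in Ioi (0:ℝ), ENNReal.ofReal (φ ζ / ζ) →
      ∃ x : ℝ, 0 < x ∧ r < F x := by
    intro r hr0 hr
    set f : ℕ → ℝ → ℝ≥0∞ := fun n ζ => ENNReal.ofReal (φ ζ / (ζ + 1/(n+1))) with hfdef
    have hxpos : ∀ n : ℕ, (0:ℝ) < 1/(n+1) := fun n => by positivity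
    have hmeas : ∀ n, AEMeasurable (f n) (volume.restrict (Ioi 0)) := fun n =>
      ENNReal.measurable_ofReal.comp_aemeasurable
        (hint _ (hxpos n)).aestronglyMeasurable.aemeasurable
    have hmono : ∀ᵐ ζ ∂(volume.restrict (Ioi 0)), Monotone fun n => f n ζ := by
      filter_upwards [ae_restrict_mem measurableSet_Ioi] with ζ hζ
      rw [mem_Ioi] at hζ
      intro n m hnm
      apply ENNReal.ofReal_le_ofReal
      apply div_le_div_of_nonneg_left (hφpos ζ hζ) (add_pos hζ (hxpos m))
      have h1 : (1:ℝ)/(m+1) ≤ 1/(n+1) := by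
        apply one_div_le_one_div_of_le (by positivity)
        have : (n:ℝ) ≤ m := Nat.cast_le.mpr hnm
        linarith
      linarith
    have htend : ∀ᵐ ζ ∂(volume.restrict (Ioi 0)),
        Tendsto (fun n => f n ζ) atTop (𝓝 (ENNReal.ofReal (φ ζ / ζ))) := by
      filter_upwards [ae_restrict_mem measurableSet_Ioi] with ζ hζ
      rw [mem_Ioi] at hζ
      have h1 : Tendsto (fun n : ℕ => ζ + 1/(n+1:ℝ)) atTop (𝓝 ζ) := by
        have := tendsto_const_nhds (x := ζ) (f := atTop (α := ℕ)) |>.add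
          tendsto_one_div_add_atTop_nhds_zero_nat
        simpa using this
      exact (ENNReal.continuous_ofReal.tendsto _).comp
        (Tendsto.div tendsto_const_nhds h1 hζ.ne')
    have hlim := lintegral_tendsto_of_tendsto_of_monotone hmeas hmono htend
    obtain ⟨n, hn⟩ := (hlim.eventually_const_lt hr).exists
    refine ⟨1/(n+1), hxpos n, ?_⟩
    have hintx := hint _ (hxpos n)
    have hnn : 0 ≤ᵐ[volume.restrict (Ioi 0)] fun ζ => φ ζ / (ζ + 1/(n+1)) := by
      filter_upwards [ae_restrict_mem measurableSet_Ioi] with ζ hζ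
      rw [mem_Ioi] at hζ
      exact div_nonneg (hφpos ζ hζ) (add_pos hζ (hxpos n)).le
    have hFx : F (1/(n+1)) = (∫⁻ ζ in Ioi (0:ℝ), f n ζ).toReal :=
      integral_eq_lintegral_of_nonneg_ae hnn hintx.aestronglyMeasurable
    have hfin : (∫⁻ ζ in Ioi (0:ℝ), f n ζ) < ⊤ := hintx.lintegral_lt_top
    have := ENNReal.toReal_strict_mono hfin.ne hn
    rwa [ENNReal.toReal_ofReal hr0, ← hFx] at this
  -- strict upper bound
  have hupper : ∀ x : ℝ, 0 < x →
      ENNReal.ofReal (F x) < ∫⁻ ζ in Ioi (0:ℝ), ENNReal.ofReal (φ ζ / ζ) := by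
    intro x hx
    set g : ℝ → ℝ≥0∞ := fun ζ => ENNReal.ofReal (φ ζ / (ζ + x)) with hgdef
    set h : ℝ → ℝ≥0∞ := fun ζ => ENNReal.ofReal (φ ζ * x / (ζ * (ζ + x))) with hhdef
    have hgmeas : AEMeasurable g (volume.restrict (Ioi 0)) :=
      ENNReal.measurable_ofReal.comp_aemeasurable
        (hint x hx).aestronglyMeasurable.aemeasurable
    have hhmeas : AEMeasurable h (volume.restrict (Ioi 0)) := by
      apply ENNReal.measurable_ofReal.comp_aemeasurable
      exact ((hφm.aemeasurable.mul aemeasurable_const).div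
        ((measurable_id.mul (measurable_id.add_const x)).aemeasurable))
    have hsplit : (fun ζ => ENNReal.ofReal (φ ζ / ζ))
        =ᵐ[volume.restrict (Ioi 0)] fun ζ => g ζ + h ζ := by
      filter_upwards [ae_restrict_mem measurableSet_Ioi] with ζ hζ
      rw [mem_Ioi] at hζ
      have h1 : φ ζ / ζ = φ ζ / (ζ + x) + φ ζ * x / (ζ * (ζ + x)) := by
        field_simp
      rw [h1, ENNReal.ofReal_add (div_nonneg (hφpos ζ hζ) (add_pos hζ hx).le)
        (div_nonneg (mul_nonneg (hφpos ζ hζ) hx.le) (mul_pos hζ (add_pos hζ hx)).le)]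
    have hLg : ENNReal.ofReal (F x) = ∫⁻ ζ in Ioi (0:ℝ), g ζ := by
      have hnn : 0 ≤ᵐ[volume.restrict (Ioi 0)] fun ζ => φ ζ / (ζ + x) := by
        filter_upwards [ae_restrict_mem measurableSet_Ioi] with ζ hζ
        rw [mem_Ioi] at hζ
        exact div_nonneg (hφpos ζ hζ) (add_pos hζ hx).le
      have hFx : F x = (∫⁻ ζ in Ioi (0:ℝ), g ζ).toReal :=
        integral_eq_lintegral_of_nonneg_ae hnn (hint x hx).aestronglyMeasurable
      rw [hFx, ENNReal.ofReal_toReal (hint x hx).lintegral_lt_top.ne]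
    have hhne : (∫⁻ ζ in Ioi (0:ℝ), h ζ) ≠ 0 := by
      intro h0
      apply hne
      have := (lintegral_eq_zero_iff' hhmeas).mp h0
      filter_upwards [this, ae_restrict_mem measurableSet_Ioi] with ζ hz hζ
      rw [mem_Ioi] at hζ
      have : φ ζ * x / (ζ * (ζ + x)) ≤ 0 := ENNReal.ofReal_eq_zero.mp hz
      have hd : 0 < ζ * (ζ + x) := mul_pos hζ (add_pos hζ hx)
      have hle : φ ζ * x ≤ 0 := by
        by_contra hcon
        push_neg at hcon
        exact absurd (div_pos hcon hd) (not_lt.mpr this)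
      have : φ ζ ≤ 0 := nonpos_of_mul_nonpos_right ?_ hx
      · exact le_antisymm this (hφpos ζ hζ)
      · linarith [hle]
    calc ENNReal.ofReal (F x) = ∫⁻ ζ in Ioi (0:ℝ), g ζ := hLg
      _ < (∫⁻ ζ in Ioi (0:ℝ), g ζ) + ∫⁻ ζ in Ioi (0:ℝ), h ζ :=
        ENNReal.lt_add_right (hLg ▸ ENNReal.ofReal_ne_top) hhne
      _ = ∫⁻ ζ in Ioi (0:ℝ), (g ζ + h ζ) := (lintegral_add_left' hgmeas h).symm
      _ = ∫⁻ ζ in Ioi (0:ℝ), ENNReal.ofReal (φ ζ / ζ) := (lintegral_congr_ae hsplit).symm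
  -- translation between EReal and ENNReal comparisons
  have hiff : ∀ r : ℝ, 0 < r → (((r : EReal) < (M : EReal)) ↔ ENNReal.ofReal r < M) := by
    intro r hr
    rw [← EReal.coe_ennreal_lt_coe_ennreal_iff, EReal.coe_ennreal_ofReal,
      max_eq_left hr.le]
  constructor
  · rintro ⟨hc, hcM⟩
    have hcM' : ENNReal.ofReal c < ∫⁻ ζ in Ioi (0:ℝ), ENNReal.ofReal (φ ζ / ζ) := by
      rw [← hM]; exact (hiff c hc).mp hcM
    obtain ⟨x₁, hx₁, hFx₁⟩ := hkey c hc.le hcM'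
    obtain ⟨x₂, hFx₂, hx₁₂⟩ :=
      ((hFtop.eventually_lt_const hc).and (eventually_gt_atTop x₁)).exists
    have hcont : ContinuousOn F (Icc x₁ x₂) := fun z hz =>
      (hFcont z (lt_of_lt_of_le hx₁ hz.1)).continuousWithinAt
    have hsub := intermediate_value_Icc' hx₁₂.le hcont
    have hcmem : c ∈ Icc (F x₂) (F x₁) := ⟨hFx₂.le, hFx₁.le⟩
    obtain ⟨x₀, hx₀mem, hFx₀⟩ := hsub hcmem
    have hx₀pos : 0 < x₀ := lt_of_lt_of_le hx₁ hx₀mem.1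
    refine ⟨x₀, ⟨hx₀pos, hFx₀⟩, ?_⟩
    rintro y ⟨hy, hFy⟩
    have hFy' : F y = c := hFy
    rcases lt_trichotomy y x₀ with hlt | heq | hgt
    · have := hanti y x₀ hy hlt
      rw [hFy', hFx₀] at this
      exact absurd this (lt_irrefl c)
    · exact heq
    · have := hanti x₀ y hx₀pos hgt
      rw [hFy', hFx₀] at this
      exact absurd this (lt_irrefl c)
  · rintro hnot ⟨x, hx, hFx⟩
    by_cases hc : 0 < c
    · apply hnot
      refine ⟨hc, (hiff c hc).mpr ?_⟩
      rw [hM]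
      have hFx' : F x = c := hFx
      calc ENNReal.ofReal c = ENNReal.ofReal (F x) := by rw [hFx']
        _ < _ := hupper x hx
    · push_neg at hc
      have hFx' : F x = c := hFx
      exact absurd (hFx' ▸ hFpos x hx) (not_lt.mpr hc)
end

section
/- For every x > 0, ∫₀^∞ ζ^{−1/2} sin²(a ζ^{1/2}) / (ζ + x) dζ = (π/(2√x)) (1 − e^{−2a√x}), for any a > 0. -/
/-!
Substituting `ζ = t²` turns the integrand into `(1 - cos (2 a t)) / (t² + x)` on `(0, ∞)`.
Both terms are instances of `∫₀^∞ cos (b t) / (t² + c²) dt = π / (2c) · e^{-c|b|}`, which is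
Fourier inversion for `e^{-c|t|}`: its Fourier transform `2c / (c² + (2πξ)²)` is computed
directly from `∫₀^∞ e^{-z t} dt = 1 / z`.
-/

open MeasureTheory Set Real FourierTransform

theorem integrable_exp_neg_mul_abs {c : ℝ} (hc : 0 < c) :
    Integrable fun t : ℝ => Real.exp (-(c * |t|)) := by
  rw [← integrableOn_univ, ← Iic_union_Ioi (a := (0 : ℝ)), integrableOn_union]
  constructor
  · refine (integrableOn_exp_mul_Iic hc 0).congr_fun (fun t ht => ?_) measurableSet_Iic
    rw [abs_of_nonpos ht, mul_neg, neg_neg]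
  · refine (integrableOn_exp_mul_Ioi (neg_lt_zero.2 hc) 0).congr_fun (fun t ht => ?_)
      measurableSet_Ioi
    simp only [abs_of_pos (mem_Ioi.1 ht), neg_mul]

theorem fourier_exp_neg_mul_abs {c : ℝ} (hc : 0 < c) (w : ℝ) :
    𝓕 (fun t : ℝ => (Real.exp (-(c * |t|)) : ℂ)) w
      = (2 * c / (c ^ 2 + (2 * π * w) ^ 2) : ℝ) := by
  set y : ℂ := 2 * π * w * Complex.I with hy_def
  have hIic : ∀ t ∈ Iic (0 : ℝ),
      Complex.exp (↑(-2 * π * t * w) * Complex.I) • (Real.exp (-(c * |t|)) : ℂ)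
        = Complex.exp ((c - y) * t) := by
    intro t ht
    rw [abs_of_nonpos ht, smul_eq_mul, Complex.ofReal_exp, ← Complex.exp_add, hy_def]
    push_cast; ring_nf
  have hIoi : ∀ t ∈ Ioi (0 : ℝ),
      Complex.exp (↑(-2 * π * t * w) * Complex.I) • (Real.exp (-(c * |t|)) : ℂ)
        = Complex.exp (-(c + y) * t) := by
    intro t ht
    rw [abs_of_pos ht, smul_eq_mul, Complex.ofReal_exp, ← Complex.exp_add, hy_def]
    push_cast; ring_nf
  have hre₁ : 0 < (c - y).re := by simp [y, hc]
  have hre₂ : (-(c + y)).re < 0 := by simp [y, hc]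
  rw [fourier_real_eq_integral_exp_smul, ← intervalIntegral.integral_Iic_add_Ioi
    ((integrableOn_exp_mul_complex_Iic hre₁ 0).congr_fun (fun t ht => (hIic t ht).symm)
      measurableSet_Iic)
    ((integrableOn_exp_mul_complex_Ioi hre₂ 0).congr_fun (fun t ht => (hIoi t ht).symm)
      measurableSet_Ioi),
    setIntegral_congr_fun measurableSet_Iic hIic, setIntegral_congr_fun measurableSet_Ioi hIoi,
    integral_exp_mul_complex_Iic hre₁, integral_exp_mul_complex_Ioi hre₂]
  have h₁ : (c : ℂ) - y ≠ 0 := fun h => by simp [h] at hre₁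
  have h₂ : (c : ℂ) + y ≠ 0 := fun h => by simp [h] at hre₂
  have hden : ((c ^ 2 + (2 * π * w) ^ 2 : ℝ) : ℂ) = (c - y) * (c + y) := by
    rw [hy_def]; push_cast; ring_nf; rw [Complex.I_sq]; ring
  rw [Complex.ofReal_div, hden]
  simp only [Complex.ofReal_zero, mul_zero, Complex.exp_zero]
  field_simp
  push_cast
  ring

theorem integrable_inv_sq_add_sq {c : ℝ} (hc : c ≠ 0) :
    Integrable fun t : ℝ => (t ^ 2 + c ^ 2)⁻¹ := by
  refine ((integrable_inv_one_add_sq.comp_mul_left' (inv_ne_zero hc)).const_mul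
    (c ^ 2)⁻¹).congr (Filter.Eventually.of_forall fun t => ?_)
  field_simp
  ring

theorem integral_cos_mul_div_sq_add_sq (b : ℝ) {c : ℝ} (hc : 0 < c) :
    ∫ t, Real.cos (b * t) / (t ^ 2 + c ^ 2) = π / c * Real.exp (-(c * |b|)) := by
  set f : ℝ → ℂ := fun t => (Real.exp (-(c * |t|)) : ℂ)
  set h : ℝ → ℝ := fun t => 2 * c * (t ^ 2 + c ^ 2)⁻¹
  have hFf : 𝓕 f = fun w => (h (2 * π * w) : ℂ) := by
    ext w; rw [fourier_exp_neg_mul_abs hc]; simp only [h]; congr 1; ring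
  have hh : Integrable h := (integrable_inv_sq_add_sq hc.ne').const_mul _
  have hh' : Integrable fun w => h (2 * π * w) := hh.comp_mul_left' (by positivity)
  have hf : Integrable f := (integrable_exp_neg_mul_abs hc).ofReal
  have hinv := congrFun ((by fun_prop : Continuous f).fourierInv_fourier_eq hf
    (hFf ▸ hh'.ofReal)) b
  rw [fourierInv_eq_fourier_neg, fourier_real_eq_integral_exp_smul, hFf] at hinv
  have hint : Integrable fun v : ℝ =>
      Complex.exp (↑(-2 * π * v * -b) * Complex.I) • (h (2 * π * v) : ℂ) :=
    hh'.ofReal.bdd_mul (c := 1) (by fun_prop)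
      (Filter.Eventually.of_forall fun v => (Complex.norm_exp_ofReal_mul_I _).le)
  have hre := congrArg Complex.re hinv
  rw [← RCLike.re_eq_complex_re, ← integral_re hint] at hre
  simp only [RCLike.re_eq_complex_re, smul_eq_mul, Complex.re_mul_ofReal,
    Complex.exp_ofReal_mul_I_re, f, Complex.ofReal_re] at hre
  have hsub : ∫ x : ℝ, Real.cos (-2 * π * x * -b) * h (2 * π * x)
      = (2 * π)⁻¹ * (2 * c) * ∫ t, Real.cos (b * t) / (t ^ 2 + c ^ 2) :=
    calc ∫ x : ℝ, Real.cos (-2 * π * x * -b) * h (2 * π * x)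
        = ∫ x : ℝ, (fun t => Real.cos (b * t) * h t) (2 * π * x) := by
          simp only [neg_mul, mul_neg, neg_neg, mul_comm b]
      _ = (2 * π)⁻¹ * ∫ t, Real.cos (b * t) * h t := by
          rw [Measure.integral_comp_mul_left (fun t => Real.cos (b * t) * h t),
            abs_of_pos (by positivity), smul_eq_mul]
      _ = _ := by
          rw [mul_assoc, ← integral_const_mul (2 * c)]
          congr 1
          exact integral_congr_ae (Filter.Eventually.of_forall fun t => by simp only [h]; ring)
  rw [hsub] at hre
  field_simp at hre ⊢
  linarith

theorem integrable_cos_mul_div_sq_add_sq (b : ℝ) {c : ℝ} (hc : c ≠ 0) :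
    Integrable fun t : ℝ => Real.cos (b * t) / (t ^ 2 + c ^ 2) := by
  simp only [div_eq_mul_inv]
  exact (integrable_inv_sq_add_sq hc).bdd_mul (c := 1) (by fun_prop)
    (Filter.Eventually.of_forall fun t => by simpa using Real.abs_cos_le_one _)

theorem integral_Ioi_cos_mul_div_sq_add_sq (b : ℝ) {c : ℝ} (hc : 0 < c) :
    ∫ t in Ioi 0, Real.cos (b * t) / (t ^ 2 + c ^ 2) = π / (2 * c) * Real.exp (-(c * |b|)) := by
  have h := integral_comp_abs (f := fun t => Real.cos (b * t) / (t ^ 2 + c ^ 2))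
  have heven : ∀ t : ℝ,
      Real.cos (b * |t|) / (|t| ^ 2 + c ^ 2) = Real.cos (b * t) / (t ^ 2 + c ^ 2) := by
    intro t
    rcases abs_choice t with ht | ht <;> simp [ht]
  simp only [heven, integral_cos_mul_div_sq_add_sq b hc] at h
  linear_combination -h / 2

/-- Stieltjes transform of `ζ^{-1/2} sin²(a √ζ)`:
`∫₀^∞ ζ^{-1/2} sin²(a √ζ)/(ζ+x) dζ = (π/(2√x))(1 − e^{-2a√x})`. -/
theorem stmt_6 (a x : ℝ) (ha : 0 < a) (hx : 0 < x) :
    (∫ ζ in Ioi (0 : ℝ), ζ ^ (-(1 : ℝ) / 2) * Real.sin (a * Real.sqrt ζ) ^ 2 / (ζ + x))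
      = π / (2 * Real.sqrt x) * (1 - Real.exp (-2 * a * Real.sqrt x)) := by
  have hc : 0 < √x := sqrt_pos.2 hx
  -- `1 = cos (0 * t)`, so both terms are evaluated by the same lemma.
  have hpt : ∀ t ∈ Ioi (0 : ℝ), (2 * t ^ ((2 : ℝ) - 1)) • ((t ^ (2 : ℝ)) ^ (-(1 : ℝ) / 2)
      * Real.sin (a * √(t ^ (2 : ℝ))) ^ 2 / (t ^ (2 : ℝ) + x))
      = Real.cos (0 * t) / (t ^ 2 + √x ^ 2) - Real.cos (2 * a * t) / (t ^ 2 + √x ^ 2) := by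
    intro t ht
    have hinv : (t ^ 2) ^ (-(1 : ℝ) / 2) = t⁻¹ := by
      rw [← rpow_natCast, ← rpow_mul (le_of_lt ht)]; norm_num [rpow_neg_one]
    rw [show (2 : ℝ) - 1 = 1 by norm_num, rpow_one, rpow_two, hinv, sqrt_sq (le_of_lt ht),
      sq_sqrt hx.le, smul_eq_mul, zero_mul, cos_zero, show 2 * a * t = 2 * (a * t) by ring,
      cos_two_mul, cos_sq']
    have ht0 : t ≠ 0 := ne_of_gt ht
    field_simp
    ring
  rw [← integral_comp_rpow_Ioi_of_pos two_pos, setIntegral_congr_fun measurableSet_Ioi hpt,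
    integral_sub (integrable_cos_mul_div_sq_add_sq 0 hc.ne').integrableOn
      (integrable_cos_mul_div_sq_add_sq _ hc.ne').integrableOn,
    integral_Ioi_cos_mul_div_sq_add_sq _ hc, integral_Ioi_cos_mul_div_sq_add_sq _ hc,
    abs_zero, mul_zero, neg_zero, exp_zero, abs_of_pos (by positivity : 0 < 2 * a),
    show -(√x * (2 * a)) = -2 * a * √x by ring]
  ring
end

section
/- Let a > 0, b > 0, and c < πa. Then there exists a unique x > 0 satisfying (π/(2√x))(1 − e^{−2a√x}) = b x + c, and this x satisfies 0 < x < (πa − c)/b. If c ≥ πa, no positive solution exists. -/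
open Real Set Filter Topology

/-! With `t = 2a√x` the left-hand side is `πa · (1 - e^{-t})/t`, and `(1 - e^{-t})/t` is the slope
of the secant from `0` of the strictly concave function `1 - e^{-t}`. Hence it decreases strictly
in `t` and stays below its limit `1` at `t = 0`: the left-hand side decreases strictly from `πa`
while `bx + c` increases, so there is at most one root, none if `c ≥ πa`, and for `c < πa` the
intermediate value theorem finds one in `(0, (πa - c)/b)`. -/

theorem strictConcaveOn_one_sub_exp_neg : StrictConcaveOn ℝ univ (fun t : ℝ => 1 - exp (-t)) := by
  refine ⟨convex_univ, fun x _ y _ hxy a b ha hb hab => ?_⟩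
  have h := strictConvexOn_exp.2 (mem_univ (-x)) (mem_univ (-y)) (neg_injective.ne hxy) ha hb hab
  simp only [smul_eq_mul, mul_neg, neg_add] at h ⊢
  linear_combination h + hab

theorem strictAntiOn_one_sub_exp_neg_div :
    StrictAntiOn (fun t : ℝ => (1 - exp (-t)) / t) {0}ᶜ := by
  intro x hx y hy hxy
  simpa using strictConcaveOn_one_sub_exp_neg.secant_strict_mono (mem_univ 0) (mem_univ x)
    (mem_univ y) hx hy hxy

theorem one_sub_exp_neg_div_lt_one {t : ℝ} (ht : 0 < t) : (1 - exp (-t)) / t < 1 := by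
  rw [div_lt_one ht]
  linarith [add_one_lt_exp (neg_ne_zero.2 ht.ne')]

theorem tendsto_one_sub_exp_neg_div :
    Tendsto (fun t : ℝ => (1 - exp (-t)) / t) (𝓝[≠] 0) (𝓝 1) := by
  have hderiv : HasDerivAt (fun t : ℝ => 1 - exp (-t)) 1 0 := by
    simpa using ((hasDerivAt_neg (0 : ℝ)).exp).const_sub 1
  refine (hasDerivAt_iff_tendsto_slope.1 hderiv).congr fun t => ?_
  simp [slope_def_field]

/-- The Stieltjes transform of `ζ^{-1/2} sin²(a√ζ)` at `x > 0`. -/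
noncomputable def stieltjesSinSq (a x : ℝ) : ℝ := π / (2 * √x) * (1 - exp (-2 * a * √x))

theorem stieltjesSinSq_eq (a x : ℝ) :
    stieltjesSinSq a x = π * a * ((1 - exp (-(2 * a * √x))) / (2 * a * √x)) := by
  rcases eq_or_ne a 0 with rfl | ha
  · simp [stieltjesSinSq]
  rcases eq_or_ne (√x) 0 with hx | hx
  · simp [stieltjesSinSq, hx]
  rw [stieltjesSinSq, neg_mul, neg_mul]
  field_simp

variable {a : ℝ}

theorem stieltjesSinSq_lt_pi_mul (ha : 0 < a) {x : ℝ} (hx : 0 < x) :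
    stieltjesSinSq a x < π * a := by
  rw [stieltjesSinSq_eq]
  exact mul_lt_of_lt_one_right (by positivity)
    (one_sub_exp_neg_div_lt_one (by positivity : 0 < 2 * a * √x))

theorem strictAntiOn_stieltjesSinSq (ha : 0 < a) : StrictAntiOn (stieltjesSinSq a) (Ioi 0) := by
  intro x (hx : 0 < x) y (hy : 0 < y) hxy
  simp only [stieltjesSinSq_eq]
  have hx' : 0 < 2 * a * √x := by have := sqrt_pos.2 hx; positivity
  have hy' : 0 < 2 * a * √y := by have := sqrt_pos.2 hy; positivity
  exact mul_lt_mul_of_pos_left (strictAntiOn_one_sub_exp_neg_div hx'.ne' hy'.ne' (by gcongr))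
    (by positivity)

theorem continuousOn_stieltjesSinSq (a : ℝ) : ContinuousOn (stieltjesSinSq a) (Ioi 0) := by
  unfold stieltjesSinSq
  refine ContinuousOn.mul (continuousOn_const.div (by fun_prop) fun x hx => ?_) (by fun_prop)
  have := sqrt_pos.2 hx
  positivity

theorem tendsto_stieltjesSinSq (ha : a ≠ 0) :
    Tendsto (stieltjesSinSq a) (𝓝[>] 0) (𝓝 (π * a)) := by
  have hlim : Tendsto (fun x => 2 * a * √x) (𝓝[>] 0) (𝓝[≠] 0) := by
    refine tendsto_nhdsWithin_of_tendsto_nhds_of_eventually_within _ ?_ ?_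
    · simpa using ((continuous_sqrt.tendsto 0).const_mul (2 * a)).mono_left nhdsWithin_le_nhds
    · filter_upwards [self_mem_nhdsWithin] with x hx
      exact mul_ne_zero (mul_ne_zero two_ne_zero ha) (sqrt_pos.2 hx).ne'
  simp only [funext (stieltjesSinSq_eq a)]
  simpa using (tendsto_one_sub_exp_neg_div.comp hlim).const_mul (π * a)

theorem eq_of_strictAntiOn_of_eq_add {f : ℝ → ℝ} {s : Set ℝ} (hf : StrictAntiOn f s) {b c : ℝ}
    (hb : 0 ≤ b) {x y : ℝ} (hx : x ∈ s) (hy : y ∈ s) (hfx : f x = b * x + c)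
    (hfy : f y = b * y + c) : x = y := by
  by_contra hne
  rcases lt_or_gt_of_ne hne with hxy | hxy
  · nlinarith [hf hx hy hxy]
  · nlinarith [hf hy hx hxy]

theorem exists_pos_eq_add_of_tendsto_nhdsGT {f : ℝ → ℝ} {M b c : ℝ} (hf : ContinuousOn f (Ioi 0))
    (hlim : Tendsto f (𝓝[>] 0) (𝓝 M)) (hlt : ∀ x, 0 < x → f x < M) (hb : 0 < b) (hc : c < M) :
    ∃ x, 0 < x ∧ f x = b * x + c := by
  set X := (M - c) / b
  have hX : 0 < X := div_pos (sub_pos.2 hc) hb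
  have hgX : f X - (b * X + c) < 0 := by
    have : b * X = M - c := mul_div_cancel₀ _ hb.ne'
    linarith [hlt X hX]
  have hg : Tendsto (fun x => f x - (b * x + c)) (𝓝[>] 0) (𝓝 (M - c)) := by
    have : Tendsto (fun x => b * x + c) (𝓝[>] 0) (𝓝 c) := by
      simpa using ((by fun_prop : Continuous fun x : ℝ => b * x + c).tendsto 0).mono_left
        nhdsWithin_le_nhds
    simpa [sub_add_cancel] using hlim.sub this
  obtain ⟨x₀, hgx₀, hx₀, hx₀X⟩ :=
    ((hg.eventually (lt_mem_nhds (sub_pos.2 hc))).and (Ioo_mem_nhdsGT hX)).exists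
  have hcont : ContinuousOn (fun x => f x - (b * x + c)) (Icc x₀ X) :=
    (hf.mono fun y hy => hx₀.trans_le hy.1).sub (by fun_prop)
  obtain ⟨x, hx, hgx⟩ := intermediate_value_Icc' hx₀X.le hcont ⟨hgX.le, hgx₀.le⟩
  exact ⟨x, hx₀.trans_le hx.1, sub_eq_zero.1 hgx⟩

/-- For `a, b > 0`: the equation `(π/(2√x))(1 − e^{-2a√x}) = b x + c` has a unique
positive solution iff `c < π a`, with bound `x < (π a − c)/b`. -/
theorem stmt_7 (a b c : ℝ) (ha : 0 < a) (hb : 0 < b) :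
    (c < π * a →
      (∃! x : ℝ, 0 < x ∧
        π / (2 * Real.sqrt x) * (1 - Real.exp (-2 * a * Real.sqrt x)) = b * x + c) ∧
      (∀ x : ℝ, 0 < x →
        π / (2 * Real.sqrt x) * (1 - Real.exp (-2 * a * Real.sqrt x)) = b * x + c →
        x < (π * a - c) / b)) ∧
    (π * a ≤ c →
      ¬ ∃ x : ℝ, 0 < x ∧
        π / (2 * Real.sqrt x) * (1 - Real.exp (-2 * a * Real.sqrt x)) = b * x + c) := by
  simp only [← stieltjesSinSq.eq_1]
  have hlt : ∀ x, 0 < x → stieltjesSinSq a x < π * a := fun x => stieltjesSinSq_lt_pi_mul ha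
  refine ⟨fun hc => ⟨?_, fun x hx hfx => ?_⟩, fun hc ⟨x, hx, hfx⟩ => ?_⟩
  · obtain ⟨x, hx, hfx⟩ := exists_pos_eq_add_of_tendsto_nhdsGT (continuousOn_stieltjesSinSq a)
      (tendsto_stieltjesSinSq ha.ne') hlt hb hc
    exact ⟨x, ⟨hx, hfx⟩, fun y ⟨hy, hfy⟩ =>
      eq_of_strictAntiOn_of_eq_add (strictAntiOn_stieltjesSinSq ha) hb.le hy hx hfy hfx⟩
  · rw [lt_div_iff₀ hb]
    linarith [hlt x hx]
  · linarith [hlt x hx, mul_pos hb hx]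
end

section
/- Let a > 0, b > 0, 0 < α < 1, and c < π a^{α−1} csc(πα). Then there exists a unique x > 0 satisfying π csc(πα)(x^α − a^α)/(x − a) = b x + c (with the left side interpreted as π α a^{α−1} csc(πα) at x = a), and 0 < x < (π a^{α−1} csc(πα) − c)/b. -/
open Real

/-- The slope function of `x ↦ x^α` through `a`, extended by the derivative at `a`. -/
noncomputable def slFun (a α : ℝ) : ℝ → ℝ :=
  fun x => if x = a then α * a ^ (α - 1) else (x ^ α - a ^ α) / (x - a)

lemma slFun_anti {a α : ℝ} (ha : 0 < a) (hα : 0 < α) (hα1 : α < 1) :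
    StrictAntiOn (slFun a α) (Set.Ici 0) := by
  have hderiv : ∀ t : ℝ, 0 < t → HasDerivAt (fun u : ℝ => u ^ α) (α * t ^ (α - 1)) t :=
    fun t ht => Real.hasDerivAt_rpow_const (Or.inl ht.ne')
  have hcont : ContinuousOn (fun u : ℝ => u ^ α) (Set.Ici 0) :=
    fun x _ => (Real.continuousAt_rpow_const x α (Or.inr hα.le)).continuousWithinAt
  have hconc := Real.strictConcaveOn_rpow hα hα1
  have hα1' : α - 1 < 0 := by linarith
  intro x hx y hy hxy
  by_cases hxa : x = a
  · rw [hxa] at hxy ⊢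
    have hya : y ≠ a := ne_of_gt hxy
    obtain ⟨ξ, hξ, hξeq⟩ := exists_hasDerivAt_eq_slope (fun u : ℝ => u ^ α)
      (fun t => α * t ^ (α - 1)) hxy
      (hcont.mono (fun t ht => le_trans ha.le ht.1))
      (fun t ht => hderiv t (lt_trans ha ht.1))
    have hξpos : a < ξ := hξ.1
    have hlt : ξ ^ (α - 1) < a ^ (α - 1) :=
      Real.rpow_lt_rpow_of_neg ha hξpos hα1'
    have e1 : slFun a α a = α * a ^ (α - 1) := if_pos rfl
    have e2 : slFun a α y = (y ^ α - a ^ α) / (y - a) := if_neg hya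
    rw [e1, e2]
    calc (y ^ α - a ^ α) / (y - a) = α * ξ ^ (α - 1) := hξeq.symm
      _ < α * a ^ (α - 1) := by nlinarith
  · by_cases hya : y = a
    · rw [hya] at hxy ⊢
      obtain ⟨ξ, hξ, hξeq⟩ := exists_hasDerivAt_eq_slope (fun u : ℝ => u ^ α)
        (fun t => α * t ^ (α - 1)) hxy
        (hcont.mono (fun t ht => le_trans hx ht.1))
        (fun t ht => hderiv t (lt_of_le_of_lt hx ht.1))
      have hξa : ξ < a := hξ.2
      have hξpos : 0 < ξ := lt_of_le_of_lt hx hξ.1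
      have hlt : a ^ (α - 1) < ξ ^ (α - 1) :=
        Real.rpow_lt_rpow_of_neg hξpos hξa hα1'
      have e1 : slFun a α a = α * a ^ (α - 1) := if_pos rfl
      have e2 : slFun a α x = (x ^ α - a ^ α) / (x - a) := if_neg hxa
      rw [e1, e2]
      have hxane : x - a ≠ 0 := sub_ne_zero.2 hxa
      have hslx : (x ^ α - a ^ α) / (x - a) = (a ^ α - x ^ α) / (a - x) := by
        rw [div_eq_div_iff hxane (sub_ne_zero.2 (ne_of_gt hxy))]; ring
      rw [hslx, ← hξeq]
      nlinarith
    · have e1 : slFun a α x = (x ^ α - a ^ α) / (x - a) := if_neg hxa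
      have e2 : slFun a α y = (y ^ α - a ^ α) / (y - a) := if_neg hya
      rw [e1, e2]
      exact hconc.secant_strict_mono ha.le hx hy hxa hya hxy

lemma slFun_contOn {a α : ℝ} (ha : 0 < a) (hα : 0 < α) :
    ContinuousOn (slFun a α) (Set.Ici 0) := by
  intro x hx
  by_cases hxa : x = a
  · rw [hxa]
    have hd : HasDerivAt (fun u : ℝ => u ^ α) (α * a ^ (α - 1)) a :=
      Real.hasDerivAt_rpow_const (Or.inl ha.ne')
    have ht := hasDerivAt_iff_tendsto_slope.1 hd
    have hT : Filter.Tendsto (slFun a α) (nhds a) (nhds (slFun a α a)) := by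
      rw [← nhdsNE_sup_pure a, Filter.tendsto_sup]
      constructor
      · have heq : slope (fun u : ℝ => u ^ α) a =ᶠ[nhdsWithin a {a}ᶜ] slFun a α := by
          filter_upwards [self_mem_nhdsWithin] with z hz
          have hz' : z ≠ a := hz
          simp [slFun, hz', slope_def_field]
        have : slFun a α a = α * a ^ (α - 1) := if_pos rfl
        rw [this]
        exact ht.congr' heq
      · exact tendsto_pure_nhds _ _
    exact ContinuousAt.continuousWithinAt hT
  · have hev : ∀ᶠ z in nhds x, (fun z => (z ^ α - a ^ α) / (z - a)) z = slFun a α z := by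
      filter_upwards [isOpen_ne.mem_nhds hxa] with z hz
      simp [slFun, hz]
    have hca : ContinuousAt (fun z : ℝ => (z ^ α - a ^ α) / (z - a)) x :=
      ((Real.continuousAt_rpow_const x α (Or.inr hα.le)).sub continuousAt_const).div
        (continuousAt_id.sub continuousAt_const) (sub_ne_zero.2 hxa)
    exact (hca.congr hev).continuousWithinAt

/-- For `a, b > 0`, `0 < α < 1`, `c < π a^{α−1} csc(π α)`: the equation
`π csc(π α)(x^α − a^α)/(x − a) = b x + c` (extended by continuity at `x = a`)
has a unique positive solution, bounded by `(π a^{α−1} csc(π α) − c)/b`. -/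
theorem stmt_11 (a b c α : ℝ) (ha : 0 < a) (hb : 0 < b)
    (hα : 0 < α) (hα1 : α < 1)
    (hc : c < π * a ^ (α - 1) / Real.sin (π * α))
    (h : ℝ → ℝ)
    (hh : ∀ x : ℝ, h x = if x = a then π * α * a ^ (α - 1) / Real.sin (π * α)
      else π / Real.sin (π * α) * (x ^ α - a ^ α) / (x - a)) :
    (∃! x : ℝ, 0 < x ∧ h x = b * x + c) ∧
    (∀ x : ℝ, 0 < x → h x = b * x + c →
      x < (π * a ^ (α - 1) / Real.sin (π * α) - c) / b) := by
  have hπ := Real.pi_pos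
  have hsin : 0 < Real.sin (π * α) :=
    Real.sin_pos_of_pos_of_lt_pi (by positivity) (by nlinarith)
  set L : ℝ := π * a ^ (α - 1) / Real.sin (π * α) with hL
  set C : ℝ := π / Real.sin (π * α) with hCdef
  have hCpos : 0 < C := by positivity
  set sl : ℝ → ℝ := slFun a α with hsldef
  have hhs : ∀ x, h x = C * sl x := by
    intro x
    rw [hh]
    by_cases hx : x = a
    · rw [if_pos hx, hsldef, hx]
      have hv : slFun a α a = α * a ^ (α - 1) := if_pos rfl
      rw [hv, hCdef]; ring
    · rw [if_neg hx, hsldef]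
      have hv : slFun a α x = (x ^ α - a ^ α) / (x - a) := if_neg hx
      rw [hv, hCdef]; ring
  have hanti : StrictAntiOn sl (Set.Ici 0) := slFun_anti ha hα hα1
  have hslcont : ContinuousOn sl (Set.Ici 0) := slFun_contOn ha hα
  have hsl0 : sl 0 = a ^ (α - 1) := by
    simp only [hsldef, slFun, if_neg (show (0:ℝ) ≠ a from ha.ne)]
    rw [Real.zero_rpow hα.ne', zero_sub, zero_sub, neg_div_neg_eq,
      Real.rpow_sub_one ha.ne']
  have hCL : C * a ^ (α - 1) = L := by rw [hCdef, hL]; ring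
  have hlt : ∀ x : ℝ, 0 < x → sl x < a ^ (α - 1) := by
    intro x hx
    have := hanti Set.self_mem_Ici (Set.mem_Ici.2 hx.le) hx
    rwa [hsl0] at this
  have hLc : 0 < L - c := by rw [hL]; linarith
  -- the auxiliary function g
  set g : ℝ → ℝ := fun x => C * sl x - (b * x + c) with hgdef
  have hganti : StrictAntiOn g (Set.Ici 0) := by
    intro u hu v hv huv
    have h1 : C * sl v < C * sl u := by
      have := hanti hu hv huv
      nlinarith
    simp only [hgdef]
    nlinarith
  have hgcont : ContinuousOn g (Set.Ici 0) :=
    (continuousOn_const.mul hslcont).sub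
      (((continuous_const.mul continuous_id).add continuous_const).continuousOn)
  have hg0 : 0 < g 0 := by
    simp only [hgdef, hsl0, mul_zero, zero_add, hCL]
    linarith
  set x₁ : ℝ := (L - c) / b + 1 with hx₁def
  have hx₁pos : 0 < x₁ := by positivity
  have hgx₁ : g x₁ < 0 := by
    have h1 : sl x₁ < a ^ (α - 1) := hlt x₁ hx₁pos
    have h2 : C * sl x₁ < L := by nlinarith
    have h3 : b * x₁ = (L - c) + b := by
      rw [hx₁def]; field_simp
    simp only [hgdef]
    nlinarith
  -- existence via IVT
  have hmem : (0:ℝ) ∈ Set.Icc (g x₁) (g 0) := ⟨hgx₁.le, hg0.le⟩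
  have hsub : Set.Icc (0:ℝ) x₁ ⊆ Set.Ici 0 := fun t ht => ht.1
  obtain ⟨x, hxmem, hgx⟩ :=
    intermediate_value_Icc' hx₁pos.le (hgcont.mono hsub) hmem
  have hxpos : 0 < x := by
    rcases eq_or_lt_of_le hxmem.1 with heq | hlt'
    · exfalso; rw [← heq] at hgx; linarith
    · exact hlt'
  have hxeq : h x = b * x + c := by
    have : C * sl x - (b * x + c) = 0 := hgx
    rw [hhs]; linarith
  -- the bound, used also for uniqueness packaging
  have hbound : ∀ y : ℝ, 0 < y → h y = b * y + c → y < (L - c) / b := by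
    intro y hy hyeq
    have h1 : sl y < a ^ (α - 1) := hlt y hy
    have h2 : b * y + c < L := by
      rw [← hyeq, hhs]; nlinarith
    rw [lt_div_iff₀ hb]; linarith
  refine ⟨⟨x, ⟨hxpos, hxeq⟩, ?_⟩, hbound⟩
  rintro y ⟨hy, hyeq⟩
  have hgy : g y = 0 := by
    simp only [hgdef]
    rw [← hhs, hyeq]; ring
  by_contra hne
  rcases lt_or_gt_of_ne hne with hlt' | hlt'
  · have := hganti (Set.mem_Ici.2 hy.le) (Set.mem_Ici.2 hxpos.le) hlt'
    rw [hgx, hgy] at this; exact lt_irrefl 0 this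
  · have := hganti (Set.mem_Ici.2 hxpos.le) (Set.mem_Ici.2 hy.le) hlt'
    rw [hgx, hgy] at this; exact lt_irrefl 0 this
end

section
/- Let a > 0 and b > 0. For every c ∈ ℝ there exists a unique x > 0 with log(x/a)/(x−a) = b x + c, where the left side is interpreted as 1/a at x = a. -/
open Real

/-- For `a, b > 0` and any `c`, the equation `log(x/a)/(x − a) = b x + c`
(with value `1/a` at `x = a`) has a unique positive solution. -/
theorem stmt_12 (a b : ℝ) (ha : 0 < a) (hb : 0 < b) (c : ℝ)
    (h : ℝ → ℝ)
    (hh : ∀ x : ℝ, h x = if x = a then 1 / a else Real.log (x / a) / (x - a)) :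
    ∃! x : ℝ, 0 < x ∧ h x = b * x + c := by
  have hha : h a = 1 / a := by rw [hh, if_pos rfl]
  have hne : ∀ x : ℝ, 0 < x → x ≠ a → h x = (Real.log x - Real.log a) / (x - a) := by
    intro x hx hxa
    rw [hh, if_neg hxa, Real.log_div (ne_of_gt hx) (ne_of_gt ha)]
  -- for x > a, h x < 1/a
  have hlt_a : ∀ x : ℝ, a < x → h x < 1 / a := by
    intro x hax
    have hx : 0 < x := ha.trans hax
    have hxa : x ≠ a := ne_of_gt hax
    rw [hne x hx hxa]
    have hlog : Real.log x - Real.log a < (x - a) / a := by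
      have := Real.log_lt_sub_one_of_pos (x := x / a) (by positivity)
        (by intro hc; apply hxa; field_simp at hc; linarith)
      rw [Real.log_div (ne_of_gt hx) (ne_of_gt ha)] at this
      have : Real.log x - Real.log a < x / a - 1 := this
      calc Real.log x - Real.log a < x / a - 1 := this
        _ = (x - a) / a := by field_simp
    have hd : 0 < x - a := by linarith
    calc (Real.log x - Real.log a) / (x - a) < ((x - a) / a) / (x - a) :=
          div_lt_div_of_pos_right hlog hd
      _ = 1 / a := by rw [div_right_comm, div_self (ne_of_gt hd)]
  -- for 0 < x < a, 1/a < h x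
  have hgt_a : ∀ x : ℝ, 0 < x → x < a → 1 / a < h x := by
    intro x hx hax
    have hxa : x ≠ a := ne_of_lt hax
    rw [hne x hx hxa]
    have hlog : Real.log x - Real.log a < (x - a) / a := by
      have := Real.log_lt_sub_one_of_pos (x := x / a) (by positivity)
        (by intro hc; apply hxa; field_simp at hc; linarith)
      rw [Real.log_div (ne_of_gt hx) (ne_of_gt ha)] at this
      calc Real.log x - Real.log a < x / a - 1 := this
        _ = (x - a) / a := by field_simp
    have hd : x - a < 0 := by linarith
    have hd0 : x - a ≠ 0 := ne_of_lt hd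
    have : ((x - a) / a) / (x - a) < (Real.log x - Real.log a) / (x - a) :=
      div_lt_div_of_neg_of_lt hd hlog
    calc 1 / a = ((x - a) / a) / (x - a) := by
          rw [div_right_comm, div_self hd0]
      _ < (Real.log x - Real.log a) / (x - a) := this
  -- strict antitonicity on (0, ∞)
  have hanti : ∀ x y : ℝ, 0 < x → 0 < y → x < y → h y < h x := by
    intro x y hx hy hxy
    rcases eq_or_ne x a with rfl | hxa
    · rw [hha]; exact hlt_a y hxy
    rcases eq_or_ne y a with rfl | hya
    · rw [hha]; exact hgt_a x hx hxy
    · rw [hne x hx hxa, hne y hy hya]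
      exact strictConcaveOn_log_Ioi.secant_strict_mono (Set.mem_Ioi.mpr ha)
        (Set.mem_Ioi.mpr hx) (Set.mem_Ioi.mpr hy) hxa hya hxy
  -- continuity on (0, ∞)
  have hcont : ContinuousOn h (Set.Ioi 0) := by
    intro x hx
    obtain heq | hxa := eq_or_ne x a
    · rw [heq]
      -- continuity at a via the derivative of log
      rw [← continuousWithinAt_diff_self]
      have hslope : Filter.Tendsto (slope Real.log a) (nhdsWithin a {a}ᶜ) (nhds a⁻¹) :=
        hasDerivAt_iff_tendsto_slope.mp (Real.hasDerivAt_log (ne_of_gt ha))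
      have hsub : nhdsWithin a (Set.Ioi 0 \ {a}) ≤ nhdsWithin a {a}ᶜ :=
        nhdsWithin_mono a (fun y hy => hy.2)
      have h1 : Filter.Tendsto (slope Real.log a) (nhdsWithin a (Set.Ioi 0 \ {a}))
          (nhds a⁻¹) := hslope.mono_left hsub
      have heq : ∀ y ∈ Set.Ioi (0:ℝ) \ {a}, h y = slope Real.log a y := by
        intro y hy
        rw [hne y hy.1 hy.2, slope_def_field]
      refine Filter.Tendsto.congr' ?_ (by simpa [hha, one_div] using h1)
      filter_upwards [self_mem_nhdsWithin] with y hy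
      exact (heq y hy).symm
    · -- continuity at x ≠ a
      have hx0 : (0:ℝ) < x := hx
      have hcx : ContinuousAt (fun y : ℝ => Real.log (y / a) / (y - a)) x := by
        apply ContinuousAt.div
        · exact (Real.continuousAt_log (by positivity)).comp
            (continuousAt_id.div_const a)
        · exact continuousAt_id.sub continuousAt_const
        · exact sub_ne_zero.mpr hxa
      have : ContinuousAt h x := by
        apply hcx.congr
        filter_upwards [isOpen_compl_singleton.mem_nhds hxa] with y hy
        simp [hh y, show y ≠ a from hy]
      exact this.continuousWithinAt
  -- large endpoint
  obtain ⟨x₁, hx₁a, hgx₁⟩ : ∃ x₁, a < x₁ ∧ h x₁ < b * x₁ + c := by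
    refine ⟨max a ((1 / a - c) / b) + 1, ?_, ?_⟩
    · have := le_max_left a ((1 / a - c) / b); linarith
    · have hx₁a : a < max a ((1 / a - c) / b) + 1 := by
        have := le_max_left a ((1 / a - c) / b); linarith
      have h1 : h (max a ((1 / a - c) / b) + 1) < 1 / a := hlt_a _ hx₁a
      have h2 : (1 / a - c) / b ≤ max a ((1 / a - c) / b) := le_max_right _ _
      have h2' : b * ((1 / a - c) / b) ≤ b * max a ((1 / a - c) / b) :=
        mul_le_mul_of_nonneg_left h2 (le_of_lt hb)
      have h3 : b * ((1 / a - c) / b) = 1 / a - c := by field_simp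
      have h4 : b * (max a ((1 / a - c) / b) + 1)
          = b * max a ((1 / a - c) / b) + b := by ring
      linarith
  have hx₁pos : 0 < x₁ := ha.trans hx₁a
  -- small endpoint
  obtain ⟨x₀, hx₀pos, hx₀a, hgx₀⟩ :
      ∃ x₀, 0 < x₀ ∧ x₀ < a ∧ b * x₀ + c < h x₀ := by
    set E : ℝ := a * (b * a + |c|) + 1 with hEdef
    have habs : c ≤ |c| := le_abs_self c
    have habs0 : 0 ≤ |c| := abs_nonneg c
    have hE0 : 0 ≤ a * (b * a + |c|) := by positivity
    have hE1 : 1 ≤ E := by rw [hEdef]; linarith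
    refine ⟨min (a / 2) (Real.exp (Real.log a - E)), ?_, ?_, ?_⟩
    · exact lt_min (by linarith) (Real.exp_pos _)
    · exact lt_of_le_of_lt (min_le_left _ _) (by linarith)
    set x₀ : ℝ := min (a / 2) (Real.exp (Real.log a - E)) with hx₀def
    have hx₀pos : 0 < x₀ := lt_min (by linarith) (Real.exp_pos _)
    have hx₀a : x₀ < a := lt_of_le_of_lt (min_le_left _ _) (by linarith)
    have hlogx₀ : Real.log x₀ ≤ Real.log a - E := by
      calc Real.log x₀ ≤ Real.log (Real.exp (Real.log a - E)) :=
            Real.log_le_log hx₀pos (min_le_right _ _)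
        _ = Real.log a - E := Real.log_exp _
    have hnum : E ≤ Real.log a - Real.log x₀ := by linarith
    have hnumpos : 0 < Real.log a - Real.log x₀ := by linarith
    have hrw : h x₀ = (Real.log a - Real.log x₀) / (a - x₀) := by
      rw [hne x₀ hx₀pos (ne_of_lt hx₀a), ← neg_div_neg_eq]
      ring_nf
    have hden : 0 < a - x₀ := by linarith
    have hstep : (Real.log a - Real.log x₀) / a ≤ (Real.log a - Real.log x₀) / (a - x₀) :=
      div_le_div_of_nonneg_left (le_of_lt hnumpos) hden (by linarith)
    have hstep2 : b * a + c + 1 / a ≤ (Real.log a - Real.log x₀) / a := by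
      rw [le_div_iff₀ ha]
      have h1 : 1 / a * a = 1 := by field_simp
      nlinarith
    have hba : b * x₀ < b * a := by nlinarith
    have h1a : 0 < 1 / a := by positivity
    rw [hrw]
    calc b * x₀ + c < b * a + c + 1 / a := by linarith
      _ ≤ (Real.log a - Real.log x₀) / a := hstep2
      _ ≤ (Real.log a - Real.log x₀) / (a - x₀) := hstep
  have hx₀x₁ : x₀ ≤ x₁ := le_of_lt (hx₀a.trans hx₁a)
  -- intermediate value theorem for g = h - (b x + c)
  set g : ℝ → ℝ := fun x => h x - (b * x + c) with hgdef
  have hgcont : ContinuousOn g (Set.Icc x₀ x₁) := by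
    apply ContinuousOn.sub
    · exact hcont.mono (fun y hy => lt_of_lt_of_le hx₀pos hy.1)
    · exact (continuous_const.mul continuous_id').add continuous_const |>.continuousOn
  have hmem : (0:ℝ) ∈ Set.Icc (g x₁) (g x₀) := by
    constructor
    · simp only [hgdef]; linarith
    · simp only [hgdef]; linarith
  obtain ⟨x, hxmem, hgx⟩ := intermediate_value_Icc' hx₀x₁ hgcont hmem
  have hxpos : 0 < x := lt_of_lt_of_le hx₀pos hxmem.1
  have hxroot : h x = b * x + c := by
    have : h x - (b * x + c) = 0 := hgx
    linarith
  refine ⟨x, ⟨hxpos, hxroot⟩, ?_⟩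
  rintro y ⟨hypos, hyroot⟩
  by_contra hne'
  rcases lt_or_gt_of_ne hne' with hlt | hlt
  · have := hanti y x hypos hxpos hlt
    rw [hxroot, hyroot] at this
    nlinarith
  · have := hanti x y hxpos hypos hlt
    rw [hxroot, hyroot] at this
    nlinarith
end

section
/- Let α < 1, α ≠ 0, a > 0. For x > 0, Γ(1−α) x^{−α} e^{ax} Γ(α, ax) = ∫₀^∞ ζ^{−α} e^{−aζ}/(ζ+x) dζ > 0; consequently, if additionally α < 0, b > 0, and c < a^α Γ(−α), the equation Γ(1−α) x^{−α} e^{ax} Γ(α, ax) = b x + c has exactly one solution x > 0, which satisfies 0 < x < (a^α Γ(−α) − c)/b. -/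
open MeasureTheory Set Real

/-- The upper incomplete Gamma function `Γ(α, w) = ∫_w^∞ t^{α−1} e^{−t} dt`. -/
noncomputable def upperGamma (α w : ℝ) : ℝ := ∫ t in Ioi w, t ^ (α - 1) * Real.exp (-t)

/-!
Writing `1 / (ζ + x) = ∫₀^∞ e^{-(ζ + x) t} dt` and exchanging the integrals shows that the Stieltjes
transform `S(x) = ∫₀^∞ φ(ζ) / (ζ + x) dζ` of `φ(ζ) = ζ^{-α} e^{-aζ}` equals
`∫₀^∞ e^{-xt} Γ(1 - α) (a + t)^{α - 1} dt`; shifting by `a` and scaling by `x` turns this into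
`Γ(1 - α) x^{-α} e^{ax} Γ(α, ax)`, and positivity of `φ` gives positivity of `S`.
For `α < 0` also `φ(ζ) / ζ` is integrable, so `S` is continuous and strictly decreasing on `[0, ∞)`
with `S(0) = a^α Γ(-α)`: its graph crosses the increasing line `b x + c` exactly once, and before
the line reaches the level `S(0)`.
-/

theorem setIntegral_pos_of_forall_pos {X : Type*} [MeasurableSpace X] {μ : Measure X}
    {s : Set X} {f : X → ℝ} (hs : MeasurableSet s) (hμs : μ s ≠ 0) (hf : IntegrableOn f s μ)
    (hpos : ∀ x ∈ s, 0 < f x) : 0 < ∫ x in s, f x ∂μ := by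
  rw [setIntegral_pos_iff_support_of_nonneg_ae
    (ae_restrict_of_forall_mem hs fun x hx => (hpos x hx).le) hf]
  have : Function.support f ∩ s = s := inter_eq_right.mpr fun x hx => (hpos x hx).ne'
  rw [this]
  exact pos_iff_ne_zero.mpr hμs

theorem integral_comp_add_left_Ioi {E : Type*} [NormedAddCommGroup E] [NormedSpace ℝ E]
    (g : ℝ → E) (a b : ℝ) : ∫ t in Ioi b, g (a + t) = ∫ s in Ioi (a + b), g s := by
  have h := (measurePreserving_add_left volume a).setIntegral_preimage_emb
    (measurableEmbedding_addLeft a) g (Ioi (a + b))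
  rwa [preimage_const_add_Ioi, add_sub_cancel_left] at h

theorem integral_exp_neg_mul_Ioi_zero {r : ℝ} (hr : 0 < r) :
    ∫ t in Ioi 0, exp (-r * t) = r⁻¹ := by
  rw [integral_exp_mul_Ioi (neg_neg_of_pos hr), mul_zero, exp_zero, div_neg, neg_div, neg_neg,
    one_div]

theorem integral_rpow_neg_mul_exp_neg_mul_Ioi {α r : ℝ} (hα : α < 1) (hr : 0 < r) :
    ∫ ζ in Ioi 0, ζ ^ (-α) * exp (-(r * ζ)) = Gamma (1 - α) * r ^ (α - 1) := by
  have h := integral_rpow_mul_exp_neg_mul_Ioi (sub_pos.mpr hα) hr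
  rw [sub_sub_cancel_left, one_div, inv_rpow hr.le, ← rpow_neg hr.le, neg_sub] at h
  rw [h, mul_comm]

theorem integrableOn_rpow_mul_exp_neg_mul {s r : ℝ} (hs : -1 < s) (hr : 0 < r) :
    IntegrableOn (fun ζ : ℝ => ζ ^ s * exp (-(r * ζ))) (Ioi 0) := by
  simpa [neg_mul] using integrableOn_rpow_mul_exp_neg_mul_rpow hs zero_lt_one hr

theorem integral_exp_neg_mul_mul_add_rpow {α a x : ℝ} (ha : 0 < a) (hx : 0 < x) :
    ∫ t in Ioi 0, exp (-(x * t)) * (a + t) ^ (α - 1)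
      = exp (a * x) * x ^ (-α) * upperGamma α (a * x) := by
  have hshift : ∫ t in Ioi 0, exp (-(x * t)) * (a + t) ^ (α - 1)
      = exp (a * x) * ∫ s in Ioi a, s ^ (α - 1) * exp (-(x * s)) := by
    rw [← integral_const_mul, ← add_zero a, ← integral_comp_add_left_Ioi, add_zero]
    refine setIntegral_congr_fun measurableSet_Ioi fun t _ => ?_
    rw [mul_comm (_ ^ _), ← mul_assoc, ← exp_add]
    ring_nf
  have hscale : ∫ s in Ioi a, s ^ (α - 1) * exp (-(x * s)) = x ^ (-α) * upperGamma α (a * x) := by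
    calc ∫ s in Ioi a, s ^ (α - 1) * exp (-(x * s))
        = ∫ s in Ioi a, x ^ (-α) * (x * ((x * s) ^ (α - 1) * exp (-(x * s)))) := by
          refine setIntegral_congr_fun measurableSet_Ioi fun s hs => ?_
          rw [mul_rpow hx.le (ha.trans hs).le, rpow_neg hx.le, rpow_sub_one hx.ne']
          field_simp
      _ = x ^ (-α) * upperGamma α (a * x) := by
          rw [integral_const_mul, integral_const_mul, ← smul_eq_mul x,
            integral_comp_mul_left_Ioi' (fun u => u ^ (α - 1) * exp (-u)) a hx, mul_comm x a,
            upperGamma]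
  rw [hshift, hscale, mul_assoc]

noncomputable def stieltjesTransform (f : ℝ → ℝ) (x : ℝ) : ℝ :=
  ∫ ζ in Ioi 0, f ζ / (ζ + x)

section StieltjesTransform

variable {f : ℝ → ℝ} {x : ℝ}

theorem integrableOn_div_add (hf : IntegrableOn f (Ioi 0)) (hx : 0 < x) :
    IntegrableOn (fun ζ => f ζ / (ζ + x)) (Ioi 0) := by
  refine (hf.norm.div_const x).mono' (hf.aestronglyMeasurable.div₀ (by fun_prop)) ?_
  refine ae_restrict_of_forall_mem measurableSet_Ioi fun ζ (hζ : 0 < ζ) => ?_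
  rw [norm_div, Real.norm_of_nonneg (show 0 ≤ ζ + x by linarith)]
  exact div_le_div_of_nonneg_left (norm_nonneg _) hx (by linarith)

theorem norm_div_add_le_norm_div {ζ : ℝ} (hζ : 0 < ζ) (hx : 0 ≤ x) :
    ‖f ζ / (ζ + x)‖ ≤ ‖f ζ / ζ‖ := by
  rw [norm_div, norm_div, Real.norm_of_nonneg hζ.le,
    Real.norm_of_nonneg (show 0 ≤ ζ + x by linarith)]
  exact div_le_div_of_nonneg_left (norm_nonneg _) hζ (by linarith)

theorem integrableOn_div_add_of_integrableOn_div (hf : IntegrableOn (fun ζ => f ζ / ζ) (Ioi 0))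
    (hx : 0 ≤ x) : IntegrableOn (fun ζ => f ζ / (ζ + x)) (Ioi 0) := by
  refine hf.norm.mono' ?_ (ae_restrict_of_forall_mem measurableSet_Ioi fun ζ hζ =>
    norm_div_add_le_norm_div hζ hx)
  have : EqOn (fun ζ => f ζ / (ζ + x)) (fun ζ => f ζ / ζ * (ζ / (ζ + x))) (Ioi 0) :=
    fun ζ (hζ : 0 < ζ) => by field_simp
  have hmeas : Measurable fun ζ : ℝ => ζ / (ζ + x) := by fun_prop
  exact (hf.aestronglyMeasurable.mul hmeas.aestronglyMeasurable).congr
    ((ae_restrict_iff' measurableSet_Ioi).mpr (ae_of_all _ fun ζ hζ => (this hζ).symm))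

theorem stieltjesTransform_pos (hf : IntegrableOn f (Ioi 0)) (hpos : ∀ ζ ∈ Ioi 0, 0 < f ζ)
    (hx : 0 < x) :
    0 < stieltjesTransform f x :=
  setIntegral_pos_of_forall_pos measurableSet_Ioi (by simp) (integrableOn_div_add hf hx)
    fun ζ (hζ : 0 < ζ) => div_pos (hpos ζ hζ) (by linarith)

theorem stieltjesTransform_strictAntiOn (hf : IntegrableOn (fun ζ => f ζ / ζ) (Ioi 0))
    (hpos : ∀ ζ ∈ Ioi 0, 0 < f ζ) : StrictAntiOn (stieltjesTransform f) (Ici 0) := by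
  intro x (hx : 0 ≤ x) y (hy : 0 ≤ y) hxy
  have hix := integrableOn_div_add_of_integrableOn_div hf hx
  have hiy := integrableOn_div_add_of_integrableOn_div hf hy
  rw [← sub_pos, stieltjesTransform, stieltjesTransform, ← integral_sub hix hiy]
  refine setIntegral_pos_of_forall_pos measurableSet_Ioi (by simp) (hix.sub hiy)
    fun ζ (hζ : 0 < ζ) => sub_pos.mpr ?_
  exact div_lt_div_of_pos_left (hpos ζ hζ) (by linarith) (by linarith)

theorem continuousOn_stieltjesTransform (hf : IntegrableOn (fun ζ => f ζ / ζ) (Ioi 0)) :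
    ContinuousOn (stieltjesTransform f) (Ici 0) := by
  refine continuousOn_of_dominated
    (fun x hx => (integrableOn_div_add_of_integrableOn_div hf hx).aestronglyMeasurable)
    (fun x hx => ae_restrict_of_forall_mem measurableSet_Ioi fun ζ hζ =>
      norm_div_add_le_norm_div hζ hx)
    hf.norm (ae_restrict_of_forall_mem measurableSet_Ioi fun ζ (hζ : 0 < ζ) => ?_)
  exact continuousOn_const.div (continuousOn_const.add continuousOn_id)
    fun y (hy : 0 ≤ y) => by positivity

theorem stieltjesTransform_zero : stieltjesTransform f 0 = ∫ ζ in Ioi 0, f ζ / ζ := by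
  simp [stieltjesTransform]

theorem stieltjesTransform_eq_integral_exp_mul_laplace (hf : IntegrableOn f (Ioi 0))
    (hx : 0 < x) :
    stieltjesTransform f x
      = ∫ t in Ioi 0, exp (-(x * t)) * ∫ ζ in Ioi 0, f ζ * exp (-(t * ζ)) := by
  set F : ℝ → ℝ → ℝ := fun ζ t => f ζ * exp (-(ζ + x) * t)
  have hF : Integrable (Function.uncurry F)
      ((volume.restrict (Ioi 0)).prod (volume.restrict (Ioi 0))) := by
    have hmeas : AEStronglyMeasurable (Function.uncurry F)
        ((volume.restrict (Ioi 0)).prod (volume.restrict (Ioi 0))) :=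
      hf.aestronglyMeasurable.comp_fst.mul (by fun_prop)
    refine (integrable_prod_iff hmeas).mpr
      ⟨ae_restrict_of_forall_mem measurableSet_Ioi fun ζ (hζ : 0 < ζ) => ?_, ?_⟩
    · exact (integrableOn_exp_mul_Ioi (a := -(ζ + x)) (by linarith) 0).const_mul (f ζ)
    · refine (integrableOn_div_add hf.norm hx).congr_fun (fun ζ (hζ : 0 < ζ) => ?_)
        measurableSet_Ioi
      simp only [Function.uncurry_apply_pair, F, norm_mul, norm_of_nonneg (exp_pos _).le]
      rw [integral_const_mul, integral_exp_neg_mul_Ioi_zero (by linarith), div_eq_mul_inv]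
  calc stieltjesTransform f x = ∫ ζ in Ioi 0, ∫ t in Ioi 0, F ζ t := by
        refine setIntegral_congr_fun measurableSet_Ioi fun ζ (hζ : 0 < ζ) => ?_
        rw [integral_const_mul, integral_exp_neg_mul_Ioi_zero (by linarith), div_eq_mul_inv]
    _ = ∫ t in Ioi 0, ∫ ζ in Ioi 0, F ζ t := integral_integral_swap hF
    _ = _ := by
        refine setIntegral_congr_fun measurableSet_Ioi fun t _ => ?_
        rw [← integral_const_mul]
        refine integral_congr_ae (ae_of_all _ fun ζ => ?_)
        simp only [F]
        rw [mul_left_comm, ← exp_add]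
        ring_nf

end StieltjesTransform

theorem stieltjesTransform_rpow_neg_mul_exp_neg_mul {α a x : ℝ} (hα : α < 1) (ha : 0 < a)
    (hx : 0 < x) : stieltjesTransform (fun ζ => ζ ^ (-α) * exp (-(a * ζ))) x
      = Gamma (1 - α) * x ^ (-α) * exp (a * x) * upperGamma α (a * x) := by
  have hf := integrableOn_rpow_mul_exp_neg_mul (s := -α) (by linarith) ha
  have hlaplace : ∀ t ∈ Ioi (0 : ℝ), ∫ ζ in Ioi 0, ζ ^ (-α) * exp (-(a * ζ)) * exp (-(t * ζ))
      = Gamma (1 - α) * (a + t) ^ (α - 1) := fun t (ht : 0 < t) => by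
    rw [← integral_rpow_neg_mul_exp_neg_mul_Ioi hα (by linarith)]
    refine integral_congr_ae (ae_of_all _ fun ζ => ?_)
    dsimp only
    rw [mul_assoc, ← exp_add]
    ring_nf
  rw [stieltjesTransform_eq_integral_exp_mul_laplace hf hx,
    setIntegral_congr_fun measurableSet_Ioi fun t ht => by rw [hlaplace t ht, mul_left_comm],
    integral_const_mul,
    integral_exp_neg_mul_mul_add_rpow ha hx]
  ring

theorem existsUnique_pos_eq_affine_of_strictAntiOn {F : ℝ → ℝ} {b c : ℝ}
    (hcont : ContinuousOn F (Ici 0)) (hanti : StrictAntiOn F (Ici 0)) (hb : 0 < b)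
    (hc : c < F 0) :
    (∃! x, 0 < x ∧ F x = b * x + c) ∧ ∀ x, 0 < x → F x = b * x + c → x < (F 0 - c) / b := by
  set g : ℝ → ℝ := fun x => F x - (b * x + c)
  have hg : StrictAntiOn g (Ici 0) := fun x hx y hy hxy => by
    have := hanti hx hy hxy
    have := mul_lt_mul_of_pos_left hxy hb
    simp only [g]
    linarith
  have hbound : ∀ x, 0 < x → F x = b * x + c → x < (F 0 - c) / b := fun x hx hFx => by
    have := hanti self_mem_Ici hx.le hx
    rw [lt_div_iff₀ hb]
    linarith
  refine ⟨?_, hbound⟩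
  set x₁ := (F 0 - c) / b
  have hx₁ : 0 < x₁ := div_pos (sub_pos.mpr hc) hb
  have hgx₁ : g x₁ < 0 := by
    have := hanti self_mem_Ici hx₁.le hx₁
    simp only [g, x₁, mul_div_cancel₀ _ hb.ne']
    linarith
  have hg0 : 0 < g 0 := by simp only [g]; linarith
  have hgcont : ContinuousOn g (Icc 0 x₁) := (hcont.mono Icc_subset_Ici_self).sub (by fun_prop)
  obtain ⟨x₀, ⟨hx₀_nonneg, -⟩, hgx₀⟩ := intermediate_value_Icc' hx₁.le hgcont ⟨hgx₁.le, hg0.le⟩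
  have hx₀ : 0 < x₀ := hx₀_nonneg.lt_of_ne fun h => by rw [← h] at hgx₀; linarith
  refine ⟨x₀, ⟨hx₀, sub_eq_zero.mp hgx₀⟩, fun y ⟨hy, hFy⟩ => ?_⟩
  exact hg.injOn hy.le hx₀.le (by rw [hgx₀]; simp only [g, hFy, sub_self])

theorem stmt_19_general (α a : ℝ) (hα1 : α < 1) (ha : 0 < a) :
    (∀ x : ℝ, 0 < x →
      Real.Gamma (1 - α) * x ^ (-α) * Real.exp (a * x) * upperGamma α (a * x)
        = (∫ ζ in Ioi (0 : ℝ), ζ ^ (-α) * Real.exp (-(a * ζ)) / (ζ + x)) ∧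
      0 < Real.Gamma (1 - α) * x ^ (-α) * Real.exp (a * x) * upperGamma α (a * x)) ∧
    (∀ b c : ℝ, α < 0 → 0 < b → c < a ^ α * Real.Gamma (-α) →
      (∃! x : ℝ, 0 < x ∧
        Real.Gamma (1 - α) * x ^ (-α) * Real.exp (a * x) * upperGamma α (a * x)
          = b * x + c) ∧
      (∀ x : ℝ, 0 < x →
        Real.Gamma (1 - α) * x ^ (-α) * Real.exp (a * x) * upperGamma α (a * x)
          = b * x + c →
        x < (a ^ α * Real.Gamma (-α) - c) / b)) := by
  set f : ℝ → ℝ := fun ζ => ζ ^ (-α) * exp (-(a * ζ))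
  have hpos : ∀ ζ ∈ Ioi (0 : ℝ), 0 < f ζ := fun ζ (hζ : 0 < ζ) => by positivity
  have hS : ∀ x, 0 < x → Gamma (1 - α) * x ^ (-α) * exp (a * x) * upperGamma α (a * x)
      = stieltjesTransform f x := fun x hx =>
    (stieltjesTransform_rpow_neg_mul_exp_neg_mul hα1 ha hx).symm
  refine ⟨fun x hx => ⟨hS x hx, hS x hx ▸ stieltjesTransform_pos
    (integrableOn_rpow_mul_exp_neg_mul (by linarith) ha) hpos hx⟩, fun b c hα hb hc => ?_⟩
  have hdiv : EqOn (fun ζ => f ζ / ζ) (fun ζ => ζ ^ (-(α + 1)) * exp (-(a * ζ))) (Ioi 0) :=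
    fun ζ (hζ : 0 < ζ) => by
      simp only [f]
      rw [neg_add', rpow_sub_one hζ.ne', div_mul_eq_mul_div]
  have hf : IntegrableOn (fun ζ => f ζ / ζ) (Ioi 0) :=
    (integrableOn_rpow_mul_exp_neg_mul (by linarith) ha).congr_fun hdiv.symm measurableSet_Ioi
  have hS0 : stieltjesTransform f 0 = a ^ α * Gamma (-α) := by
    rw [stieltjesTransform_zero, setIntegral_congr_fun measurableSet_Ioi hdiv,
      integral_rpow_neg_mul_exp_neg_mul_Ioi (by linarith) ha, show 1 - (α + 1) = -α by ring,
      add_sub_cancel_right, mul_comm]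
  obtain ⟨hex, hbound⟩ := existsUnique_pos_eq_affine_of_strictAntiOn
    (continuousOn_stieltjesTransform hf) (stieltjesTransform_strictAntiOn hf hpos) hb (hS0 ▸ hc)
  refine ⟨(existsUnique_congr fun x => and_congr_right fun hx => by rw [hS x hx]).mpr hex,
    fun x hx hx' => hS0 ▸ hbound x hx (hS x hx ▸ hx')⟩

/-- For `α < 1`, `α ≠ 0`, `a > 0` and `x > 0`:
`Γ(1−α) x^{−α} e^{ax} Γ(α, ax) = ∫₀^∞ ζ^{−α} e^{−aζ}/(ζ+x) dζ > 0`.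
If moreover `α < 0`, `b > 0`, `c < a^α Γ(−α)`, then
`Γ(1−α) x^{−α} e^{ax} Γ(α, ax) = b x + c` has exactly one positive solution,
bounded by `(a^α Γ(−α) − c)/b`. -/
theorem stmt_19 (α a : ℝ) (hα1 : α < 1) (hα0 : α ≠ 0) (ha : 0 < a) :
    (∀ x : ℝ, 0 < x →
      Real.Gamma (1 - α) * x ^ (-α) * Real.exp (a * x) * upperGamma α (a * x)
        = (∫ ζ in Ioi (0 : ℝ), ζ ^ (-α) * Real.exp (-(a * ζ)) / (ζ + x)) ∧
      0 < Real.Gamma (1 - α) * x ^ (-α) * Real.exp (a * x) * upperGamma α (a * x)) ∧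
    (∀ b c : ℝ, α < 0 → 0 < b → c < a ^ α * Real.Gamma (-α) →
      (∃! x : ℝ, 0 < x ∧
        Real.Gamma (1 - α) * x ^ (-α) * Real.exp (a * x) * upperGamma α (a * x)
          = b * x + c) ∧
      (∀ x : ℝ, 0 < x →
        Real.Gamma (1 - α) * x ^ (-α) * Real.exp (a * x) * upperGamma α (a * x)
          = b * x + c →
        x < (a ^ α * Real.Gamma (-α) - c) / b)) :=
  stmt_19_general α a hα1 ha
end
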